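/- Let H > 0, ρ > 0, and let ν : ℝ³ → ℝ be measurable with ν_m(1+|v|) ≤ ν(v) ≤ ν_M(1+|v|) for constants 0 < ν_m ≤ ν_M. Suppose g ∈ L²((0,H); L²(M dv)) is a (weak) solution of v_z ∂_z g + ρ ν(v) g = 0 on (0,H) × ℝ³ satisfying the diffuse reflection boundary conditions g(0, v) = √(2π) ∫_{w_z<0} |w_z| g(0, w) M(w) dw for v_z > 0 and g(H, v) = √(2π) ∫_{w_z>0} w_z g(H, w) M(w) dw for v_z < 0. Then g = 0; consequently, for each h ∈ L²((0,H); L²(M dv)) the problem v_z ∂_z g + ρ ν g = h with these boundary conditions has at most one solution in L²((0,H); L²(M dv)). -/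

import Mathlib

/-!
Along a velocity `v` with `v_z ≠ 0` the equation is the linear ODE `∂_z g = -(ρ ν(v) / v_z) g`,
and `ν(v) ≥ νm |v_z|`, so from the inflow wall to the outflow wall `g` is damped by at least
`θ = exp (-ρ νm H) < 1`. The diffuse reflection conditions make the inflow data constants `c₀`
(at `z = 0`) and `c_H` (at `z = H`), each the outgoing flux at its wall; as `√(2π) |v_z| M` is a
probability density on each half-space, `|c_H| ≤ θ |c₀|` and `|c₀| ≤ θ |c_H|`. Hence
`c₀ = c_H = 0` and `g = 0`. Uniqueness for the inhomogeneous problem follows by linearity.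
-/

open Set MeasureTheory

/-- The normalized Maxwellian `M(v) = (2π)^{-3/2} exp(−|v|²/2)` on `ℝ³`. -/
noncomputable def Maxw (v : ℝ × ℝ × ℝ) : ℝ :=
  (2 * Real.pi) ^ (-(3:ℝ) / 2) * Real.exp (-(v.1 ^ 2 + v.2.1 ^ 2 + v.2.2 ^ 2) / 2)

open Real Filter

lemma eq_mul_exp_of_hasDerivWithinAt {f : ℝ → ℝ} {c H : ℝ}
    (hf : ∀ z ∈ Icc 0 H, HasDerivWithinAt f (-(c * f z)) (Icc 0 H) z) :
    ∀ z ∈ Icc 0 H, f z = f 0 * exp (-(c * z)) := by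
  have hexp (z : ℝ) : HasDerivAt (fun y => exp (c * y)) (exp (c * z) * c) z := by
    simpa using ((hasDerivAt_id z).const_mul c).exp
  have hcont : ContinuousOn (fun z => f z * exp (c * z)) (Icc 0 H) := fun z hz =>
    (hf z hz).continuousWithinAt.mul (hexp z).continuousAt.continuousWithinAt
  have hderiv : ∀ z ∈ Ico 0 H, HasDerivWithinAt (fun z => f z * exp (c * z)) 0 (Ici z) z := by
    intro z hz
    refine (((hf z (Ico_subset_Icc_self hz)).mul (hexp z).hasDerivWithinAt).congr_deriv
      (by ring)).mono_of_mem_nhdsWithin ?_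
    exact mem_of_superset (Ico_mem_nhdsGE hz.2) (Ico_subset_Icc_self.trans
      (Icc_subset_Icc_left hz.1))
  intro z hz
  have h := constant_of_has_deriv_right_zero hcont hderiv z hz
  rw [mul_zero, exp_zero, mul_one] at h
  rw [← h, exp_neg, mul_assoc, mul_inv_cancel₀ (exp_pos _).ne', mul_one]

lemma abs_le_exp_mul_abs_of_eq_mul_exp {a b k κ H : ℝ} (hH : 0 ≤ H) (hk : κ ≤ k)
    (hb : b = a * exp (-(k * H))) : |b| ≤ exp (-(κ * H)) * |a| := by
  rw [hb, abs_mul, abs_of_pos (exp_pos _), mul_comm]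
  gcongr

lemma mul_le_mul_div_abs {ρ νm n x : ℝ} (hρ : 0 ≤ ρ) (hx : x ≠ 0) (h : νm * |x| ≤ n) :
    ρ * νm ≤ ρ * n / |x| := by
  rw [le_div_iff₀ (abs_pos.2 hx), mul_assoc]
  exact mul_le_mul_of_nonneg_left h hρ

lemma eq_zero_of_abs_le_mul_abs {a b θ : ℝ} (hθ₀ : 0 ≤ θ) (hθ₁ : θ < 1)
    (hab : |a| ≤ θ * |b|) (hba : |b| ≤ θ * |a|) : a = 0 := by
  have haa : |a| ≤ θ * θ * |a| := hab.trans (by rw [mul_assoc]; gcongr)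
  have hθθ : θ * θ < 1 := by nlinarith
  exact abs_eq_zero.1 (le_antisymm (by nlinarith [abs_nonneg a]) (abs_nonneg a))

lemma abs_snd_snd_le_sqrt (v : ℝ × ℝ × ℝ) : |v.2.2| ≤ √(v.1 ^ 2 + v.2.1 ^ 2 + v.2.2 ^ 2) := by
  rw [← sqrt_sq_eq_abs]
  exact sqrt_le_sqrt (by nlinarith [sq_nonneg v.1, sq_nonneg v.2.1])

lemma exp_neg_sq_div_two_eq (x : ℝ) : exp (-x ^ 2 / 2) = exp (-(1 / 2) * x ^ 2) := by
  ring_nf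

lemma integrable_exp_neg_sq_div_two : Integrable fun x : ℝ => exp (-x ^ 2 / 2) := by
  simpa only [exp_neg_sq_div_two_eq] using integrable_exp_neg_mul_sq (by norm_num : (0:ℝ) < 1 / 2)

lemma integral_exp_neg_sq_div_two : ∫ x : ℝ, exp (-x ^ 2 / 2) = √(2 * π) := by
  simp only [exp_neg_sq_div_two_eq, integral_gaussian]
  congr 1
  ring

lemma integrable_abs_mul_exp_neg_sq_div_two : Integrable fun x : ℝ => |x| * exp (-x ^ 2 / 2) := by
  refine (integrable_mul_exp_neg_mul_sq (by norm_num : (0:ℝ) < 1 / 2)).abs.congr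
    (Eventually.of_forall fun x => ?_)
  simp only [abs_mul, abs_of_pos (exp_pos _), exp_neg_sq_div_two_eq]

lemma integral_Ioi_abs_mul_exp_neg_sq_div_two : ∫ x in Ioi 0, |x| * exp (-x ^ 2 / 2) = 1 := by
  have h : ∫ x in Ioi (0:ℝ), ((x * exp (-x ^ 2 / 2) : ℝ) : ℂ) = 1 := by
    convert integral_mul_cexp_neg_mul_sq (b := 1 / 2) (by norm_num) using 2
    · push_cast; ring_nf
    · norm_num
  rw [setIntegral_congr_fun measurableSet_Ioi fun x (hx : 0 < x) => by rw [abs_of_pos hx]]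
  rw [integral_complex_ofReal] at h
  exact_mod_cast h

lemma integral_Iio_abs_mul_exp_neg_sq_div_two : ∫ x in Iio 0, |x| * exp (-x ^ 2 / 2) = 1 := by
  rw [← integral_Iic_eq_integral_Iio, ← neg_zero, ← integral_comp_neg_Ioi]
  simpa only [abs_neg, neg_sq, neg_zero] using integral_Ioi_abs_mul_exp_neg_sq_div_two

lemma Maxw_pos (v : ℝ × ℝ × ℝ) : 0 < Maxw v := by
  unfold Maxw; positivity

lemma measurable_Maxw : Measurable Maxw := by
  unfold Maxw; fun_prop

lemma abs_mul_Maxw_eq (w : ℝ × ℝ × ℝ) : |w.2.2| * Maxw w =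
    (2 * π) ^ (-(3:ℝ) / 2) * exp (-w.1 ^ 2 / 2) *
      (exp (-w.2.1 ^ 2 / 2) * (|w.2.2| * exp (-w.2.2 ^ 2 / 2))) := by
  have h : exp (-w.1 ^ 2 / 2) * (exp (-w.2.1 ^ 2 / 2) * exp (-w.2.2 ^ 2 / 2)) =
      exp (-(w.1 ^ 2 + w.2.1 ^ 2 + w.2.2 ^ 2) / 2) := by
    rw [← exp_add, ← exp_add]; ring_nf
  rw [Maxw, ← h]
  ring

lemma restrict_setOf_snd_snd_mem (T : Set ℝ) :
    volume.restrict {w : ℝ × ℝ × ℝ | w.2.2 ∈ T} =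
      volume.prod (volume.prod (volume.restrict T)) := by
  have hT : {w : ℝ × ℝ × ℝ | w.2.2 ∈ T} = univ ×ˢ (univ ×ˢ T) := by ext; simp
  rw [hT, Measure.volume_eq_prod, ← Measure.prod_restrict, Measure.restrict_univ,
    Measure.volume_eq_prod, ← Measure.prod_restrict, Measure.restrict_univ]

lemma ae_snd_snd_ne_zero : ∀ᵐ w : ℝ × ℝ × ℝ, w.2.2 ≠ 0 := by
  have h : {w : ℝ × ℝ × ℝ | w.2.2 = 0} = univ ×ˢ (univ ×ˢ {0}) := by ext; simp
  simp [ae_iff, h, Measure.volume_eq_prod, Measure.prod_prod]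

lemma integrableOn_abs_mul_Maxw (T : Set ℝ) :
    IntegrableOn (fun w : ℝ × ℝ × ℝ => |w.2.2| * Maxw w) {w | w.2.2 ∈ T} := by
  simp only [abs_mul_Maxw_eq, IntegrableOn, restrict_setOf_snd_snd_mem]
  exact (integrable_exp_neg_sq_div_two.const_mul _).mul_prod
    (integrable_exp_neg_sq_div_two.mul_prod integrable_abs_mul_exp_neg_sq_div_two.integrableOn)

lemma setIntegral_abs_mul_Maxw (T : Set ℝ) :
    ∫ w in {w : ℝ × ℝ × ℝ | w.2.2 ∈ T}, |w.2.2| * Maxw w =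
      (√(2 * π))⁻¹ * ∫ x in T, |x| * exp (-x ^ 2 / 2) := by
  simp only [abs_mul_Maxw_eq, restrict_setOf_snd_snd_mem]
  rw [integral_prod_mul (fun x => (2 * π) ^ (-(3:ℝ) / 2) * exp (-x ^ 2 / 2))
      (fun p : ℝ × ℝ => exp (-p.1 ^ 2 / 2) * (|p.2| * exp (-p.2 ^ 2 / 2))),
    integral_prod_mul (fun x => exp (-x ^ 2 / 2)) (fun x => |x| * exp (-x ^ 2 / 2)),
    integral_const_mul, integral_exp_neg_sq_div_two]
  have h2π : (0:ℝ) < 2 * π := by positivity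
  have hconst : (2 * π) ^ (-(3:ℝ) / 2) * √(2 * π) * √(2 * π) = (√(2 * π))⁻¹ := by
    rw [mul_assoc, mul_self_sqrt h2π.le, ← rpow_add_one h2π.ne', sqrt_eq_rpow, ← rpow_neg h2π.le]
    norm_num
  rw [← hconst]
  ring

lemma abs_sqrt_two_pi_mul_setIntegral_le {T : Set ℝ} (hTm : MeasurableSet T)
    (hT : ∫ x in T, |x| * exp (-x ^ 2 / 2) = 1) {ψ : ℝ × ℝ × ℝ → ℝ} {C : ℝ}
    (hψ : ∀ᵐ w : ℝ × ℝ × ℝ, w.2.2 ∈ T → |ψ w| ≤ C * (|w.2.2| * Maxw w)) :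
    |√(2 * π) * ∫ w in {w : ℝ × ℝ × ℝ | w.2.2 ∈ T}, ψ w| ≤ C := by
  -- no integrability of `ψ` is needed: otherwise its integral is `0`
  have h := norm_integral_le_of_norm_le (f := ψ) ((integrableOn_abs_mul_Maxw T).const_mul C)
    ((ae_restrict_iff' (measurable_snd.snd hTm)).2 hψ)
  rw [integral_const_mul, setIntegral_abs_mul_Maxw, hT, mul_one, Real.norm_eq_abs] at h
  have hsqrt : 0 < √(2 * π) := by positivity
  rw [abs_mul, abs_of_pos hsqrt, mul_comm, ← le_div_iff₀ hsqrt, div_eq_mul_inv]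
  exact h

lemma abs_mul_mul_Maxw_le {x y C : ℝ} (w : ℝ × ℝ × ℝ) (hx : |x| = |w.2.2|) (hy : |y| ≤ C) :
    |x * y * Maxw w| ≤ C * (|w.2.2| * Maxw w) := by
  rw [abs_mul, abs_mul, hx, abs_of_pos (Maxw_pos w), mul_right_comm, mul_comm]
  exact mul_le_mul_of_nonneg_right hy (mul_nonneg (abs_nonneg _) (Maxw_pos w).le)

lemma integrable_mul_mul_Maxw {a φ : ℝ × ℝ × ℝ → ℝ} (ha : Measurable a) (hφ : Measurable φ)
    (haw : ∀ w, |a w| = |w.2.2|) (h : Integrable fun w => |w.2.2| * |φ w| * Maxw w) :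
    Integrable fun w => a w * φ w * Maxw w :=
  h.congr' ((ha.mul hφ).mul measurable_Maxw).aestronglyMeasurable (Eventually.of_forall fun w => by
    simp only [Real.norm_eq_abs, abs_mul, haw, abs_abs, abs_of_pos (Maxw_pos w)])

lemma setIntegral_mul_sub_mul_Maxw (S : Set (ℝ × ℝ × ℝ)) {a φ₁ φ₂ : ℝ × ℝ × ℝ → ℝ}
    (ha : Measurable a) (hφ₁ : Measurable φ₁) (hφ₂ : Measurable φ₂) (haw : ∀ w, |a w| = |w.2.2|)
    (h₁ : Integrable fun w => |w.2.2| * |φ₁ w| * Maxw w)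
    (h₂ : Integrable fun w => |w.2.2| * |φ₂ w| * Maxw w) :
    ∫ w in S, a w * (φ₁ w - φ₂ w) * Maxw w =
      (∫ w in S, a w * φ₁ w * Maxw w) - ∫ w in S, a w * φ₂ w * Maxw w := by
  rw [← integral_sub (integrable_mul_mul_Maxw ha hφ₁ haw h₁).integrableOn
    (integrable_mul_mul_Maxw ha hφ₂ haw h₂).integrableOn]
  congr 1
  ext w
  ring

section DiffuseReflection

variable {H ρ νm : ℝ} {ν : ℝ × ℝ × ℝ → ℝ}

lemma ae_eq_mul_exp_of_transport {g : ℝ → ℝ × ℝ × ℝ → ℝ}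
    (hg : ∀ᵐ v : ℝ × ℝ × ℝ, v.2.2 ≠ 0 → ∀ z ∈ Icc (0:ℝ) H,
      HasDerivWithinAt (fun z' => g z' v) (-(ρ * ν v * g z v) / v.2.2) (Icc 0 H) z) :
    ∀ᵐ v : ℝ × ℝ × ℝ, v.2.2 ≠ 0 → ∀ z ∈ Icc (0:ℝ) H,
      g z v = g 0 v * exp (-(ρ * ν v / v.2.2 * z)) := by
  filter_upwards [hg] with v hv hvz
  exact eq_mul_exp_of_hasDerivWithinAt fun z hz => (hv hvz z hz).congr_deriv (by ring)

theorem ae_eq_zero_of_transport_diffuse_reflection (hH : 0 < H) (hρ : 0 < ρ) (hνm : 0 < νm)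
    (hν : ∀ v : ℝ × ℝ × ℝ, νm * |v.2.2| ≤ ν v) {g : ℝ → ℝ × ℝ × ℝ → ℝ}
    (hg : ∀ᵐ v : ℝ × ℝ × ℝ, v.2.2 ≠ 0 → ∀ z ∈ Icc (0:ℝ) H,
      HasDerivWithinAt (fun z' => g z' v) (-(ρ * ν v * g z v) / v.2.2) (Icc 0 H) z)
    (hb₀ : ∀ᵐ v : ℝ × ℝ × ℝ, 0 < v.2.2 →
      g 0 v = √(2 * π) * ∫ w in {w : ℝ × ℝ × ℝ | w.2.2 < 0}, |w.2.2| * g 0 w * Maxw w)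
    (hb_H : ∀ᵐ v : ℝ × ℝ × ℝ, v.2.2 < 0 →
      g H v = √(2 * π) * ∫ w in {w : ℝ × ℝ × ℝ | 0 < w.2.2}, w.2.2 * g H w * Maxw w) :
    ∀ᵐ v : ℝ × ℝ × ℝ, ∀ z ∈ Icc (0:ℝ) H, g z v = 0 := by
  set θ := exp (-(ρ * νm * H))
  set c₀ := √(2 * π) * ∫ w in {w : ℝ × ℝ × ℝ | w.2.2 < 0}, |w.2.2| * g 0 w * Maxw w
  set c_H := √(2 * π) * ∫ w in {w : ℝ × ℝ × ℝ | 0 < w.2.2}, w.2.2 * g H w * Maxw w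
  have hθ₀ : 0 ≤ θ := (exp_pos _).le
  have hθ₁ : θ < 1 := exp_lt_one_iff.2 (neg_lt_zero.2 (by positivity))
  have hsol := ae_eq_mul_exp_of_transport hg
  have hH_mem : H ∈ Icc 0 H := right_mem_Icc.2 hH.le
  have hg_H_le : ∀ᵐ w : ℝ × ℝ × ℝ, 0 < w.2.2 → |g H w| ≤ θ * |c₀| := by
    filter_upwards [hsol, hb₀] with w hs h₀ hw
    refine abs_le_exp_mul_abs_of_eq_mul_exp hH.le ?_ (by rw [← h₀ hw, hs hw.ne' H hH_mem])
    simpa only [abs_of_pos hw] using mul_le_mul_div_abs hρ.le hw.ne' (hν w)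
  have hg₀_le : ∀ᵐ w : ℝ × ℝ × ℝ, w.2.2 < 0 → |g 0 w| ≤ θ * |c_H| := by
    filter_upwards [hsol, hb_H] with w hs h_H hw
    refine abs_le_exp_mul_abs_of_eq_mul_exp (k := -(ρ * ν w / w.2.2)) hH.le ?_ ?_
    · simpa only [abs_of_neg hw, div_neg] using mul_le_mul_div_abs hρ.le hw.ne (hν w)
    · rw [← h_H hw, hs hw.ne H hH_mem, mul_assoc, ← exp_add]
      simp
  have hc_H : |c_H| ≤ θ * |c₀| :=
    abs_sqrt_two_pi_mul_setIntegral_le measurableSet_Ioi integral_Ioi_abs_mul_exp_neg_sq_div_two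
      (by filter_upwards [hg_H_le] with w hw hw₀ using abs_mul_mul_Maxw_le w rfl (hw hw₀))
  have hc₀ : |c₀| ≤ θ * |c_H| :=
    abs_sqrt_two_pi_mul_setIntegral_le measurableSet_Iio integral_Iio_abs_mul_exp_neg_sq_div_two
      (by filter_upwards [hg₀_le] with w hw hw₀ using abs_mul_mul_Maxw_le w (abs_abs _) (hw hw₀))
  have hc₀_eq : c₀ = 0 := eq_zero_of_abs_le_mul_abs hθ₀ hθ₁ hc₀ hc_H
  have hc_H_eq : c_H = 0 := eq_zero_of_abs_le_mul_abs hθ₀ hθ₁ hc_H hc₀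
  filter_upwards [hsol, hb₀, hg₀_le, ae_snd_snd_ne_zero] with v hs h₀ h₀_le hv z hz
  have hv₀ : g 0 v = 0 := by
    rcases hv.lt_or_gt with hneg | hpos
    · simpa [hc_H_eq] using h₀_le hneg
    · exact (h₀ hpos).trans hc₀_eq
  rw [hs hv z hz, hv₀, zero_mul]

theorem ae_eq_of_transport_diffuse_reflection (hH : 0 < H) (hρ : 0 < ρ) (hνm : 0 < νm)
    (hν : ∀ v : ℝ × ℝ × ℝ, νm * |v.2.2| ≤ ν v) {h g₁ g₂ : ℝ → ℝ × ℝ × ℝ → ℝ}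
    (hm₁ : Measurable (Function.uncurry g₁)) (hm₂ : Measurable (Function.uncurry g₂))
    (hd₁ : ∀ᵐ v : ℝ × ℝ × ℝ, v.2.2 ≠ 0 → ∀ z ∈ Icc (0:ℝ) H,
      HasDerivWithinAt (fun z' => g₁ z' v) ((h z v - ρ * ν v * g₁ z v) / v.2.2) (Icc 0 H) z)
    (hd₂ : ∀ᵐ v : ℝ × ℝ × ℝ, v.2.2 ≠ 0 → ∀ z ∈ Icc (0:ℝ) H,
      HasDerivWithinAt (fun z' => g₂ z' v) ((h z v - ρ * ν v * g₂ z v) / v.2.2) (Icc 0 H) z)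
    (hi₁₀ : Integrable (fun w : ℝ × ℝ × ℝ => |w.2.2| * |g₁ 0 w| * Maxw w))
    (hi₁_H : Integrable (fun w : ℝ × ℝ × ℝ => |w.2.2| * |g₁ H w| * Maxw w))
    (hi₂₀ : Integrable (fun w : ℝ × ℝ × ℝ => |w.2.2| * |g₂ 0 w| * Maxw w))
    (hi₂_H : Integrable (fun w : ℝ × ℝ × ℝ => |w.2.2| * |g₂ H w| * Maxw w))
    (hb₁₀ : ∀ᵐ v : ℝ × ℝ × ℝ, 0 < v.2.2 →
      g₁ 0 v = √(2 * π) * ∫ w in {w : ℝ × ℝ × ℝ | w.2.2 < 0}, |w.2.2| * g₁ 0 w * Maxw w)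
    (hb₁_H : ∀ᵐ v : ℝ × ℝ × ℝ, v.2.2 < 0 →
      g₁ H v = √(2 * π) * ∫ w in {w : ℝ × ℝ × ℝ | 0 < w.2.2}, w.2.2 * g₁ H w * Maxw w)
    (hb₂₀ : ∀ᵐ v : ℝ × ℝ × ℝ, 0 < v.2.2 →
      g₂ 0 v = √(2 * π) * ∫ w in {w : ℝ × ℝ × ℝ | w.2.2 < 0}, |w.2.2| * g₂ 0 w * Maxw w)
    (hb₂_H : ∀ᵐ v : ℝ × ℝ × ℝ, v.2.2 < 0 →
      g₂ H v = √(2 * π) * ∫ w in {w : ℝ × ℝ × ℝ | 0 < w.2.2}, w.2.2 * g₂ H w * Maxw w) :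
    ∀ᵐ v : ℝ × ℝ × ℝ, ∀ z ∈ Icc (0:ℝ) H, g₁ z v = g₂ z v := by
  have hzero := ae_eq_zero_of_transport_diffuse_reflection (g := fun z v => g₁ z v - g₂ z v)
    hH hρ hνm hν ?deriv ?bc₀ ?bc_H
  · filter_upwards [hzero] with v hv z hz using sub_eq_zero.1 (hv z hz)
  case deriv =>
    filter_upwards [hd₁, hd₂] with v h₁ h₂ hv z hz
    exact ((h₁ hv z hz).sub (h₂ hv z hz)).congr_deriv (by ring)
  case bc₀ =>
    filter_upwards [hb₁₀, hb₂₀] with v h₁ h₂ hv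
    rw [h₁ hv, h₂ hv, setIntegral_mul_sub_mul_Maxw _ measurable_snd.snd.abs hm₁.of_uncurry_left
      hm₂.of_uncurry_left (fun _ => abs_abs _) hi₁₀ hi₂₀, mul_sub]
  case bc_H =>
    filter_upwards [hb₁_H, hb₂_H] with v h₁ h₂ hv
    rw [h₁ hv, h₂ hv, setIntegral_mul_sub_mul_Maxw _ measurable_snd.snd hm₁.of_uncurry_left
      hm₂.of_uncurry_left (fun _ => rfl) hi₁_H hi₂_H, mul_sub]

end DiffuseReflection

theorem damped_transport_diffuse_reflection_uniqueness_general
    (H ρ νm νM : ℝ) (hH : 0 < H) (hρ : 0 < ρ) (hνm : 0 < νm)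
    (ν : ℝ × ℝ × ℝ → ℝ)
    (hbounds : ∀ v : ℝ × ℝ × ℝ,
      νm * (1 + Real.sqrt (v.1 ^ 2 + v.2.1 ^ 2 + v.2.2 ^ 2)) ≤ ν v ∧
      ν v ≤ νM * (1 + Real.sqrt (v.1 ^ 2 + v.2.1 ^ 2 + v.2.2 ^ 2))) :
    -- homogeneous problem: the only solution is `g = 0`
    (∀ g : ℝ → (ℝ × ℝ × ℝ) → ℝ,
      Measurable (Function.uncurry g) →
      IntegrableOn (fun p : ℝ × (ℝ × ℝ × ℝ) => (g p.1 p.2) ^ 2 * Maxw p.2)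
        (Ioo 0 H ×ˢ univ) →
      (∀ᵐ v : ℝ × ℝ × ℝ, v.2.2 ≠ 0 → ∀ z ∈ Icc (0:ℝ) H,
        HasDerivWithinAt (fun z' => g z' v) (-(ρ * ν v * g z v) / v.2.2) (Icc 0 H) z) →
      Integrable (fun w : ℝ × ℝ × ℝ => |w.2.2| * |g 0 w| * Maxw w) →
      Integrable (fun w : ℝ × ℝ × ℝ => |w.2.2| * |g H w| * Maxw w) →
      (∀ᵐ v : ℝ × ℝ × ℝ, 0 < v.2.2 →
        g 0 v = Real.sqrt (2 * Real.pi) *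
          ∫ w in {w : ℝ × ℝ × ℝ | w.2.2 < 0}, |w.2.2| * g 0 w * Maxw w) →
      (∀ᵐ v : ℝ × ℝ × ℝ, v.2.2 < 0 →
        g H v = Real.sqrt (2 * Real.pi) *
          ∫ w in {w : ℝ × ℝ × ℝ | 0 < w.2.2}, w.2.2 * g H w * Maxw w) →
      (∀ᵐ v : ℝ × ℝ × ℝ, ∀ z ∈ Icc (0:ℝ) H, g z v = 0)) ∧
    -- consequence: at most one solution of the inhomogeneous problem
    (∀ h : ℝ → (ℝ × ℝ × ℝ) → ℝ,
      IntegrableOn (fun p : ℝ × (ℝ × ℝ × ℝ) => (h p.1 p.2) ^ 2 * Maxw p.2)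
        (Ioo 0 H ×ˢ univ) →
      ∀ g₁ g₂ : ℝ → (ℝ × ℝ × ℝ) → ℝ,
      Measurable (Function.uncurry g₁) → Measurable (Function.uncurry g₂) →
      IntegrableOn (fun p : ℝ × (ℝ × ℝ × ℝ) => (g₁ p.1 p.2) ^ 2 * Maxw p.2)
        (Ioo 0 H ×ˢ univ) →
      IntegrableOn (fun p : ℝ × (ℝ × ℝ × ℝ) => (g₂ p.1 p.2) ^ 2 * Maxw p.2)
        (Ioo 0 H ×ˢ univ) →
      (∀ᵐ v : ℝ × ℝ × ℝ, v.2.2 ≠ 0 → ∀ z ∈ Icc (0:ℝ) H,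
        HasDerivWithinAt (fun z' => g₁ z' v) ((h z v - ρ * ν v * g₁ z v) / v.2.2)
          (Icc 0 H) z) →
      (∀ᵐ v : ℝ × ℝ × ℝ, v.2.2 ≠ 0 → ∀ z ∈ Icc (0:ℝ) H,
        HasDerivWithinAt (fun z' => g₂ z' v) ((h z v - ρ * ν v * g₂ z v) / v.2.2)
          (Icc 0 H) z) →
      Integrable (fun w : ℝ × ℝ × ℝ => |w.2.2| * |g₁ 0 w| * Maxw w) →
      Integrable (fun w : ℝ × ℝ × ℝ => |w.2.2| * |g₁ H w| * Maxw w) →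
      Integrable (fun w : ℝ × ℝ × ℝ => |w.2.2| * |g₂ 0 w| * Maxw w) →
      Integrable (fun w : ℝ × ℝ × ℝ => |w.2.2| * |g₂ H w| * Maxw w) →
      (∀ᵐ v : ℝ × ℝ × ℝ, 0 < v.2.2 →
        g₁ 0 v = Real.sqrt (2 * Real.pi) *
          ∫ w in {w : ℝ × ℝ × ℝ | w.2.2 < 0}, |w.2.2| * g₁ 0 w * Maxw w) →
      (∀ᵐ v : ℝ × ℝ × ℝ, v.2.2 < 0 →
        g₁ H v = Real.sqrt (2 * Real.pi) *
          ∫ w in {w : ℝ × ℝ × ℝ | 0 < w.2.2}, w.2.2 * g₁ H w * Maxw w) →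
      (∀ᵐ v : ℝ × ℝ × ℝ, 0 < v.2.2 →
        g₂ 0 v = Real.sqrt (2 * Real.pi) *
          ∫ w in {w : ℝ × ℝ × ℝ | w.2.2 < 0}, |w.2.2| * g₂ 0 w * Maxw w) →
      (∀ᵐ v : ℝ × ℝ × ℝ, v.2.2 < 0 →
        g₂ H v = Real.sqrt (2 * Real.pi) *
          ∫ w in {w : ℝ × ℝ × ℝ | 0 < w.2.2}, w.2.2 * g₂ H w * Maxw w) →
      (∀ᵐ v : ℝ × ℝ × ℝ, ∀ z ∈ Icc (0:ℝ) H, g₁ z v = g₂ z v)) := by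
  have hν_ge (v : ℝ × ℝ × ℝ) : νm * |v.2.2| ≤ ν v :=
    (mul_le_mul_of_nonneg_left ((abs_snd_snd_le_sqrt v).trans (le_add_of_nonneg_left zero_le_one))
      hνm.le).trans (hbounds v).1
  exact ⟨fun g _ _ hg _ _ hb₀ hb_H =>
      ae_eq_zero_of_transport_diffuse_reflection hH hρ hνm hν_ge hg hb₀ hb_H,
    fun _ _ _ _ hm₁ hm₂ _ _ hd₁ hd₂ hi₁₀ hi₁_H hi₂₀ hi₂_H hb₁₀ hb₁_H hb₂₀ hb₂_H =>
      ae_eq_of_transport_diffuse_reflection hH hρ hνm hν_ge hm₁ hm₂ hd₁ hd₂ hi₁₀ hi₁_H hi₂₀ hi₂_H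
        hb₁₀ hb₁_H hb₂₀ hb₂_H⟩

/-- Uniqueness for the damped transport equation `v_z ∂_z g + ρ ν(v) g = h` on
`(0,H) × ℝ³` with diffuse reflection boundary conditions at `z = 0` and `z = H`:
any `L²((0,H); L²(M dv))` solution of the homogeneous problem (`h = 0`) vanishes,
and consequently the inhomogeneous problem has at most one solution. -/
theorem damped_transport_diffuse_reflection_uniqueness
    (H ρ νm νM : ℝ) (hH : 0 < H) (hρ : 0 < ρ) (hνm : 0 < νm) (hmM : νm ≤ νM)
    (ν : ℝ × ℝ × ℝ → ℝ) (hν : Measurable ν)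
    (hbounds : ∀ v : ℝ × ℝ × ℝ,
      νm * (1 + Real.sqrt (v.1 ^ 2 + v.2.1 ^ 2 + v.2.2 ^ 2)) ≤ ν v ∧
      ν v ≤ νM * (1 + Real.sqrt (v.1 ^ 2 + v.2.1 ^ 2 + v.2.2 ^ 2))) :
    -- homogeneous problem: the only solution is `g = 0`
    (∀ g : ℝ → (ℝ × ℝ × ℝ) → ℝ,
      Measurable (Function.uncurry g) →
      IntegrableOn (fun p : ℝ × (ℝ × ℝ × ℝ) => (g p.1 p.2) ^ 2 * Maxw p.2)
        (Ioo 0 H ×ˢ univ) →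
      (∀ᵐ v : ℝ × ℝ × ℝ, v.2.2 ≠ 0 → ∀ z ∈ Icc (0:ℝ) H,
        HasDerivWithinAt (fun z' => g z' v) (-(ρ * ν v * g z v) / v.2.2) (Icc 0 H) z) →
      Integrable (fun w : ℝ × ℝ × ℝ => |w.2.2| * |g 0 w| * Maxw w) →
      Integrable (fun w : ℝ × ℝ × ℝ => |w.2.2| * |g H w| * Maxw w) →
      (∀ᵐ v : ℝ × ℝ × ℝ, 0 < v.2.2 →
        g 0 v = Real.sqrt (2 * Real.pi) *
          ∫ w in {w : ℝ × ℝ × ℝ | w.2.2 < 0}, |w.2.2| * g 0 w * Maxw w) →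
      (∀ᵐ v : ℝ × ℝ × ℝ, v.2.2 < 0 →
        g H v = Real.sqrt (2 * Real.pi) *
          ∫ w in {w : ℝ × ℝ × ℝ | 0 < w.2.2}, w.2.2 * g H w * Maxw w) →
      (∀ᵐ v : ℝ × ℝ × ℝ, ∀ z ∈ Icc (0:ℝ) H, g z v = 0)) ∧
    -- consequence: at most one solution of the inhomogeneous problem
    (∀ h : ℝ → (ℝ × ℝ × ℝ) → ℝ,
      IntegrableOn (fun p : ℝ × (ℝ × ℝ × ℝ) => (h p.1 p.2) ^ 2 * Maxw p.2)
        (Ioo 0 H ×ˢ univ) →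
      ∀ g₁ g₂ : ℝ → (ℝ × ℝ × ℝ) → ℝ,
      Measurable (Function.uncurry g₁) → Measurable (Function.uncurry g₂) →
      IntegrableOn (fun p : ℝ × (ℝ × ℝ × ℝ) => (g₁ p.1 p.2) ^ 2 * Maxw p.2)
        (Ioo 0 H ×ˢ univ) →
      IntegrableOn (fun p : ℝ × (ℝ × ℝ × ℝ) => (g₂ p.1 p.2) ^ 2 * Maxw p.2)
        (Ioo 0 H ×ˢ univ) →
      (∀ᵐ v : ℝ × ℝ × ℝ, v.2.2 ≠ 0 → ∀ z ∈ Icc (0:ℝ) H,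
        HasDerivWithinAt (fun z' => g₁ z' v) ((h z v - ρ * ν v * g₁ z v) / v.2.2)
          (Icc 0 H) z) →
      (∀ᵐ v : ℝ × ℝ × ℝ, v.2.2 ≠ 0 → ∀ z ∈ Icc (0:ℝ) H,
        HasDerivWithinAt (fun z' => g₂ z' v) ((h z v - ρ * ν v * g₂ z v) / v.2.2)
          (Icc 0 H) z) →
      Integrable (fun w : ℝ × ℝ × ℝ => |w.2.2| * |g₁ 0 w| * Maxw w) →
      Integrable (fun w : ℝ × ℝ × ℝ => |w.2.2| * |g₁ H w| * Maxw w) →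
      Integrable (fun w : ℝ × ℝ × ℝ => |w.2.2| * |g₂ 0 w| * Maxw w) →
      Integrable (fun w : ℝ × ℝ × ℝ => |w.2.2| * |g₂ H w| * Maxw w) →
      (∀ᵐ v : ℝ × ℝ × ℝ, 0 < v.2.2 →
        g₁ 0 v = Real.sqrt (2 * Real.pi) *
          ∫ w in {w : ℝ × ℝ × ℝ | w.2.2 < 0}, |w.2.2| * g₁ 0 w * Maxw w) →
      (∀ᵐ v : ℝ × ℝ × ℝ, v.2.2 < 0 →
        g₁ H v = Real.sqrt (2 * Real.pi) *
          ∫ w in {w : ℝ × ℝ × ℝ | 0 < w.2.2}, w.2.2 * g₁ H w * Maxw w) →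
      (∀ᵐ v : ℝ × ℝ × ℝ, 0 < v.2.2 →
        g₂ 0 v = Real.sqrt (2 * Real.pi) *
          ∫ w in {w : ℝ × ℝ × ℝ | w.2.2 < 0}, |w.2.2| * g₂ 0 w * Maxw w) →
      (∀ᵐ v : ℝ × ℝ × ℝ, v.2.2 < 0 →
        g₂ H v = Real.sqrt (2 * Real.pi) *
          ∫ w in {w : ℝ × ℝ × ℝ | 0 < w.2.2}, w.2.2 * g₂ H w * Maxw w) →
      (∀ᵐ v : ℝ × ℝ × ℝ, ∀ z ∈ Icc (0:ℝ) H, g₁ z v = g₂ z v)) :=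
  damped_transport_diffuse_reflection_uniqueness_general H ρ νm νM hH hρ hνm ν hbounds
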